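/- Assume n > 3f, T ≥ 1, Ψ ≥ T, and pulse sparsity. Suppose a correct node v satisfies r(v,t) = 1 in a round t > T + 2. Then, letting U = {u ∈ V∖F : trig(u,t) = 1}, we have v ∈ U and, for every ρ ∈ {1,…,T}: every u ∈ U satisfies r(u, t+ρ−1) = ρ, and every correct u ∉ U satisfies r(u, t+ρ−1) = ⊥. (That is, the correct nodes in U jointly and exclusively execute rounds 1 through T of one consensus instance during rounds t through t+T−1, while no other correct node executes any round of it.) -/

import Mathlib

/-!
A node triggered in round `t` has heard `1` from at least `n - 2f > f` nodes in round `t - 1`,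
hence from a correct one. Pulse sparsity around that pulse rules out every other trigger of a
correct node in the rounds `(t - T, t + T)`. Between triggers a counter only advances by
`pruneTick`, so the nodes triggered at `t` count `1, …, T`, while every other counter, after `T`
quiet rounds, has expired to `⊥ = none` by round `t` and stays there.
-/

def pruneTick (T : ℕ) (o : Option ℕ) : Option ℕ :=
  o.bind fun ρ => if ρ < T then some (ρ + 1) else none

@[simp]
lemma pruneTick_none (T : ℕ) : pruneTick T none = none := rfl

lemma pruneTick_some (T ρ : ℕ) :
    pruneTick T (some ρ) = if ρ < T then some (ρ + 1) else none := rfl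

@[simp]
lemma pruneTick_iterate_none (T k : ℕ) : (pruneTick T)^[k] none = none := by
  induction k with
  | zero => rfl
  | succ k ih => rw [Function.iterate_succ_apply', ih, pruneTick_none]

lemma pruneTick_iterate_some_of_add_le {T ρ k : ℕ} (h : ρ + k ≤ T) :
    (pruneTick T)^[k] (some ρ) = some (ρ + k) := by
  induction k with
  | zero => rfl
  | succ k ih =>
    rw [Function.iterate_succ_apply', ih (by omega), pruneTick_some, if_pos (by omega)]
    rfl

lemma pruneTick_iterate_some_of_lt_add {T ρ k : ℕ} (hρ : ρ ≤ T) (h : T < ρ + k) :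
    (pruneTick T)^[k] (some ρ) = none := by
  induction k with
  | zero => omega
  | succ k ih =>
    rw [Function.iterate_succ_apply']
    rcases Nat.lt_or_ge T (ρ + k) with hlt | hge
    · rw [ih hlt, pruneTick_none]
    · rw [pruneTick_iterate_some_of_add_le hge, pruneTick_some, if_neg (by omega)]

def IsPruningCounter (T : ℕ) (P : ℕ → Prop) [DecidablePred P] (c : ℕ → Option ℕ) : Prop :=
  ∀ s, 2 ≤ s → c s = if P s then some 1 else pruneTick T (c (s - 1))

namespace IsPruningCounter

variable {T : ℕ} {P : ℕ → Prop} [DecidablePred P] {c : ℕ → Option ℕ}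

lemma eq_iterate_of_quiet (hc : IsPruningCounter T P c) {a k : ℕ} (ha : 1 ≤ a)
    (hquiet : ∀ s, a < s → s ≤ a + k → ¬P s) : c (a + k) = (pruneTick T)^[k] (c a) := by
  induction k with
  | zero => rfl
  | succ k ih =>
    rw [Function.iterate_succ_apply', ← ih fun s h₁ h₂ => hquiet s h₁ (by omega),
      hc _ (by omega), if_neg (hquiet _ (by omega) le_rfl), Nat.add_succ_sub_one]

lemma trigger_of_eq_some_one (hc : IsPruningCounter T P c) {s : ℕ} (hs : 2 ≤ s)
    (hprev : c (s - 1) ≠ some 0) (h : c s = some 1) : P s := by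
  by_contra hP
  rw [hc s hs, if_neg hP] at h
  rcases hcs : c (s - 1) with _ | ρ
  · simp [hcs] at h
  · rw [hcs, pruneTick_some] at h
    split_ifs at h
    exact hprev (by rw [hcs]; simpa using h)

lemma eq_some_of_trigger_of_quiet (hc : IsPruningCounter T P c) {a k : ℕ} (ha : 2 ≤ a)
    (hP : P a) (hk : k < T) (hquiet : ∀ s, a < s → s ≤ a + k → ¬P s) :
    c (a + k) = some (k + 1) := by
  rw [hc.eq_iterate_of_quiet (by omega) hquiet, hc a ha, if_pos hP,
    pruneTick_iterate_some_of_add_le (by omega), add_comm]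

lemma eq_none_of_quiet (hc : IsPruningCounter T P c) {a : ℕ} (ha : 1 ≤ a)
    (hrange : c a = none ∨ ∃ ρ, c a = some ρ ∧ 1 ≤ ρ ∧ ρ ≤ T)
    (hquiet : ∀ s, a < s → s ≤ a + T → ¬P s) : c (a + T) = none := by
  rw [hc.eq_iterate_of_quiet ha hquiet]
  rcases hrange with h | ⟨ρ, h, h₁, h₂⟩
  · rw [h, pruneTick_iterate_none]
  · rw [h, pruneTick_iterate_some_of_lt_add h₂ (by omega)]

lemma eq_none_of_eq_none_of_quiet (hc : IsPruningCounter T P c) {a k : ℕ} (ha : 1 ≤ a)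
    (hnone : c a = none) (hquiet : ∀ s, a < s → s ≤ a + k → ¬P s) : c (a + k) = none := by
  rw [hc.eq_iterate_of_quiet ha hquiet, hnone, pruneTick_iterate_none]

end IsPruningCounter

section Network

variable {V : Type*} [Fintype V]

def Triggered (f : ℕ) (brec : V → V → ℕ → ℕ) (u : V) (s : ℕ) : Prop :=
  Fintype.card V - 2 * f ≤ (Finset.univ.filter fun z => brec u z (s - 1) = 1).card

instance (f : ℕ) (brec : V → V → ℕ → ℕ) (u : V) : DecidablePred (Triggered f brec u) :=
  fun _ => inferInstanceAs (Decidable (_ ≤ _))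

lemma Triggered.exists_correct_sender {F : Finset V} {f : ℕ} {b : V → ℕ → ℕ}
    {brec : V → V → ℕ → ℕ} {u : V} {s : ℕ} (hn : Fintype.card V > 3 * f) (hF : F.card ≤ f)
    (hbrec : ∀ v u, u ∉ F → ∀ t, brec v u t = b u t) (h : Triggered f brec u s) :
    ∃ w ∉ F, b w (s - 1) = 1 := by
  unfold Triggered at h
  obtain ⟨w, hwS, hwF⟩ := Finset.exists_mem_notMem_of_card_lt_card (s := F)
    (t := Finset.univ.filter fun z => brec u z (s - 1) = 1) (by omega)
  exact ⟨w, hwF, by rw [← hbrec u w hwF]; exact (Finset.mem_filter.1 hwS).2⟩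

end Network

lemma pulse_round_eq_of_sparse {V : Type*} {F : Finset V} {Ψ : ℕ} {b : V → ℕ → ℕ}
    (hsparse : ∀ v w, v ∉ F → w ∉ F → ∀ s s', 2 < s → s < s' → s' < s + Ψ →
      ¬(b v s = 1 ∧ b w s' = 1))
    {v w : V} (hv : v ∉ F) (hw : w ∉ F) {m m' : ℕ} (hbv : b v m = 1) (hbw : b w m' = 1)
    (hm : 2 < m) (hm' : 2 < m') (h : m < m' + Ψ) (h' : m' < m + Ψ) : m = m' := by
  rcases lt_trichotomy m m' with hlt | heq | hgt
  · exact absurd ⟨hbv, hbw⟩ (hsparse v w hv hw m m' hm hlt h')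
  · exact heq
  · exact absurd ⟨hbw, hbv⟩ (hsparse w v hw hv m' m hm' hgt h)

theorem pruning_consistent {V : Type*} [Fintype V]
    (F : Finset V) (f T Ψ : ℕ)
    (hn : Fintype.card V > 3 * f) (hF : F.card ≤ f)
    (hT : 1 ≤ T) (hΨ : T ≤ Ψ)
    (b : V → ℕ → ℕ) (brec : V → V → ℕ → ℕ) (r : V → ℕ → Option ℕ)
    (hbrec : ∀ v u, u ∉ F → ∀ t, brec v u t = b u t)
    (hsparse : ∀ v w, v ∉ F → w ∉ F → ∀ s s', 2 < s → s < s' → s' < s + Ψ →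
      ¬(b v s = 1 ∧ b w s' = 1))
    (hrrange : ∀ v, v ∉ F → ∀ t,
      r v t = none ∨ ∃ ρ, r v t = some ρ ∧ 1 ≤ ρ ∧ ρ ≤ T)
    (hr : ∀ v, v ∉ F → ∀ t, 2 ≤ t →
      r v t =
        if Fintype.card V - 2 * f ≤
            (Finset.univ.filter fun u => brec v u (t - 1) = 1).card
        then some 1
        else match r v (t - 1) with
          | some ρ => if ρ < T then some (ρ + 1) else none
          | none => none) :
    ∀ v, v ∉ F → ∀ t, T + 2 < t → r v t = some 1 →
      v ∈ {u : V | u ∉ F ∧ Fintype.card V - 2 * f ≤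
              (Finset.univ.filter fun z => brec u z (t - 1) = 1).card} ∧
      ∀ ρ, 1 ≤ ρ → ρ ≤ T →
        (∀ u ∈ {u : V | u ∉ F ∧ Fintype.card V - 2 * f ≤
              (Finset.univ.filter fun z => brec u z (t - 1) = 1).card},
          r u (t + ρ - 1) = some ρ) ∧
        (∀ u, u ∉ F →
          u ∉ {u : V | u ∉ F ∧ Fintype.card V - 2 * f ≤
              (Finset.univ.filter fun z => brec u z (t - 1) = 1).card} →
          r u (t + ρ - 1) = none) := by
  intro v hv t ht hrv
  have hcounter (u : V) (hu : u ∉ F) : IsPruningCounter T (Triggered f brec u) (r u) :=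
    fun s hs => by rw [hr u hu s hs]; cases r u (s - 1) <;> rfl
  have hvtrig : Triggered f brec v t := (hcounter v hv).trigger_of_eq_some_one (by omega)
    (by rcases hrrange v hv (t - 1) with h | ⟨ρ, h, h₁, -⟩ <;> simp [h]; omega) hrv
  obtain ⟨w₀, hw₀, hb₀⟩ := hvtrig.exists_correct_sender hn hF hbrec
  have hquiet (u : V) (s : ℕ) (h₁ : t - T < s) (h₂ : s < t + T) (hne : s ≠ t) :
      ¬Triggered f brec u s := fun htrig => by
    obtain ⟨w, hw, hbw⟩ := htrig.exists_correct_sender hn hF hbrec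
    have := pulse_round_eq_of_sparse hsparse hw₀ hw hb₀ hbw (by omega) (by omega) (by omega)
      (by omega)
    omega
  refine ⟨⟨hv, hvtrig⟩, fun ρ hρ₁ hρ₂ => ⟨fun u ⟨hu, hut⟩ => ?_, fun u hu hU => ?_⟩⟩
  · rw [show t + ρ - 1 = t + (ρ - 1) by omega, (hcounter u hu).eq_some_of_trigger_of_quiet
      (by omega) hut (by omega) fun s h₁ h₂ => hquiet u s (by omega) (by omega) (by omega)]
    congr 1
    omega
  · have hut : r u t = none := by
      have := (hcounter u hu).eq_none_of_quiet (a := t - T) (by omega) (hrrange u hu _)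
        fun s h₁ h₂ => if hs : s = t then hs ▸ fun h => hU ⟨hu, h⟩ else
          hquiet u s h₁ (by omega) hs
      rwa [Nat.sub_add_cancel (by omega)] at this
    rw [show t + ρ - 1 = t + (ρ - 1) by omega]
    exact (hcounter u hu).eq_none_of_eq_none_of_quiet (by omega) hut
      fun s h₁ h₂ => hquiet u s (by omega) (by omega) (by omega)
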